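/- arXiv:1104.4267 — 3 statements merged into one kernel-verified Lean document; each statement's English description precedes it below -/
import Mathlib

section
/- Action change bound for ρ₋ (Corollary 5.3, second inequality, transcribed to ℂⁿ): Let H : [0,1] × ℂⁿ → ℝ be a smooth compactly supported Hamiltonian, ρ₊ an elongation function of type ρ₊, and ρ₋ = 1 − ρ₊. Let u : ℝ × [0,1] → ℂⁿ be a smooth map solving ∂u/∂τ + i(∂u/∂t − ρ₋(τ)X_{H_t}(u(τ,t))) = 0 with finite energy E_{(H,ρ₋)}(u) < ∞. Assume that u(τ,·) converges uniformly on [0,1] as τ → −∞ to a continuous path ℓ₋ : [0,1] → ℂⁿ, that the improper integral ∫u*ω converges, and that ∫_{ℝ×[0,1]} |dH_t(u(τ,t))[∂u/∂τ(τ,t)]| dτ dt < ∞. Then ∫u*ω − ∫₀¹ H(t, ℓ₋(t)) dt ≥ −∫₀¹ sup_x H(t,x) dt = −E⁺(H). -/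
open MeasureTheory Set Filter

noncomputable section

abbrev CE (n : ℕ) : Type := EuclideanSpace ℂ (Fin n)

/-- The standard symplectic form `ω(v, w) = ⟨i • v, w⟩_ℝ` on `ℂⁿ ≅ ℝ²ⁿ`. -/
def symp {n : ℕ} (v w : CE n) : ℝ := inner (𝕜 := ℝ) ((Complex.I : ℂ) • v) w

/-- The Hamiltonian vector field `X_{H_t}(x) = -i ∇H_t(x)`. -/
def hamVF {n : ℕ} (H : ℝ → CE n → ℝ) (t : ℝ) (x : CE n) : CE n :=
  (-Complex.I : ℂ) • gradient (H t) x

/-- ∂u/∂τ. -/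
def d1 {n : ℕ} (u : ℝ × ℝ → CE n) (p : ℝ × ℝ) : CE n := deriv (fun s => u (s, p.2)) p.1

/-- ∂u/∂t. -/
def d2 {n : ℕ} (u : ℝ × ℝ → CE n) (p : ℝ × ℝ) : CE n := deriv (fun s => u (p.1, s)) p.2

/-- The strip `ℝ × [0,1]`. -/
def strip : Set (ℝ × ℝ) := Set.univ ×ˢ Set.Icc (0 : ℝ) 1

/-- The energy density `|∂u/∂τ|² + |∂u/∂t − ρ(τ) X_{H_t}(u)|²`. -/
def enDensity {n : ℕ} (H : ℝ → CE n → ℝ) (ρ : ℝ → ℝ) (u : ℝ × ℝ → CE n) (p : ℝ × ℝ) : ℝ :=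
  ‖d1 u p‖ ^ 2 + ‖d2 u p - ρ p.1 • hamVF H p.2 (u p)‖ ^ 2

/-- The energy `E_{(H,ρ)}(u)`. -/
def energy {n : ℕ} (H : ℝ → CE n → ℝ) (ρ : ℝ → ℝ) (u : ℝ × ℝ → CE n) : ℝ :=
  (1 / 2) * ∫ p in strip, enDensity H ρ u p

/-- The symplectic area `∫ u*ω`. -/
def area {n : ℕ} (u : ℝ × ℝ → CE n) : ℝ := ∫ p in strip, symp (d1 u p) (d2 u p)

def Eplus {n : ℕ} (H : ℝ → CE n → ℝ) : ℝ := ∫ t in (0:ℝ)..1, ⨆ x : CE n, H t x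
def Eminus {n : ℕ} (H : ℝ → CE n → ℝ) : ℝ := -∫ t in (0:ℝ)..1, ⨅ x : CE n, H t x
def hoferNorm {n : ℕ} (H : ℝ → CE n → ℝ) : ℝ := Eplus H + Eminus H

/-- An elongation function of type `ρ₊`. -/
structure IsElongationPlus (ρ : ℝ → ℝ) : Prop where
  smooth : ContDiff ℝ (⊤ : ℕ∞) ρ
  mono : Monotone ρ
  mem : ∀ τ : ℝ, ρ τ ∈ Set.Icc (0:ℝ) 1
  zero : ∀ τ : ℝ, τ ≤ 0 → ρ τ = 0
  one : ∀ τ : ℝ, 1 ≤ τ → ρ τ = 1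

/-- An elongation function of type `ρ_K`. -/
structure IsElongationK (K : ℝ) (ρ : ℝ → ℝ) : Prop where
  smooth : ContDiff ℝ (⊤ : ℕ∞) ρ
  mem : ∀ τ : ℝ, ρ τ ∈ Set.Icc (0:ℝ) 1
  zero : ∀ τ : ℝ, K ≤ |τ| → ρ τ = 0
  one : ∀ τ : ℝ, |τ| ≤ K - 1 → ρ τ = 1
  incr : ∀ τ ∈ Set.Icc (-K) (-K + 1), 0 ≤ deriv ρ τ
  decr : ∀ τ ∈ Set.Icc (K - 1) K, deriv ρ τ ≤ 0

/-- `u` solves the `ρ`-perturbed Cauchy–Riemann equation on `ℝ × [0,1]`. -/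
def SolvesCR {n : ℕ} (H : ℝ → CE n → ℝ) (ρ : ℝ → ℝ) (u : ℝ × ℝ → CE n) : Prop :=
  ∀ p : ℝ × ℝ, p.2 ∈ Set.Icc (0:ℝ) 1 →
    d1 u p + (Complex.I : ℂ) • (d2 u p - ρ p.1 • hamVF H p.2 (u p)) = 0

/-- `φ` is the Hamiltonian flow of `H`. -/
structure IsHamFlow {n : ℕ} (H : ℝ → CE n → ℝ) (φ : ℝ → CE n ≃ CE n) : Prop where
  init : ∀ x, φ 0 x = x
  isFlow : ∀ t x, HasDerivAt (fun s => φ s x) (hamVF H t (φ t x)) t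
  smooth : ContDiff ℝ (⊤ : ℕ∞) fun p : ℝ × CE n => φ p.1 p.2
  smooth_symm : ContDiff ℝ (⊤ : ℕ∞) fun p : ℝ × CE n => (φ p.1).symm p.2



section AuxLemmas
open Topology

variable {n : ℕ}

lemma real_inner_eq_re' (v w : CE n) :
    (inner (𝕜 := ℝ) v w : ℝ) = (inner (𝕜 := ℂ) v w : ℂ).re := by
  simp [PiLp.inner_apply, Complex.inner, Complex.re_sum]

lemma inner_I_smul_I_smul' (v w : CE n) :
    (inner (𝕜 := ℝ) ((Complex.I : ℂ) • v) ((Complex.I : ℂ) • w) : ℝ) = inner (𝕜 := ℝ) v w := by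
  rw [real_inner_eq_re', real_inner_eq_re', inner_smul_left, inner_smul_right]
  simp [Complex.conj_I]

lemma inner_I_smul_neg_I_smul' (v w : CE n) :
    (inner (𝕜 := ℝ) ((Complex.I : ℂ) • v) ((-Complex.I : ℂ) • w) : ℝ) = -inner (𝕜 := ℝ) v w := by
  rw [real_inner_eq_re', real_inner_eq_re', inner_smul_left, inner_smul_right]
  simp [Complex.conj_I]

lemma key_alg (a b g : CE n) (r : ℝ)
    (h : a + (Complex.I : ℂ) • (b - r • ((-Complex.I : ℂ) • g)) = 0) :
    (inner (𝕜 := ℝ) ((Complex.I : ℂ) • a) b : ℝ)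
      = ‖a‖ ^ 2 - r * inner (𝕜 := ℝ) g a := by
  have hb : b = (Complex.I : ℂ) • a + r • ((-Complex.I : ℂ) • g) := by
    have h2 : (Complex.I : ℂ) • (b - r • ((-Complex.I : ℂ) • g)) = -a := by
      linear_combination (norm := module) h
    have h3 : (Complex.I : ℂ) • ((Complex.I : ℂ) • (b - r • ((-Complex.I : ℂ) • g)))
        = (Complex.I : ℂ) • (-a) := by rw [h2]
    rw [smul_smul, Complex.I_mul_I, neg_one_smul] at h3
    have h4 : b - r • ((-Complex.I : ℂ) • g) = (Complex.I : ℂ) • a := by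
      have := congrArg (fun z => -z) h3
      simpa using this
    linear_combination (norm := module) h4
  rw [hb, inner_add_right, inner_I_smul_I_smul', real_inner_smul_right,
    inner_I_smul_neg_I_smul', real_inner_self_eq_norm_sq, real_inner_comm]
  ring

lemma elong_deriv_nonneg {ρ : ℝ → ℝ} (hρ : IsElongationPlus ρ) (τ : ℝ) : 0 ≤ deriv ρ τ := by
  have hd : HasDerivAt ρ (deriv ρ τ) τ :=
    ((hρ.smooth.differentiable (by simp)) τ).hasDerivAt
  have hslope : Tendsto (slope ρ τ) (𝓝[>] τ) (𝓝 (deriv ρ τ)) :=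
    (hasDerivAt_iff_tendsto_slope.1 hd).mono_left
      (nhdsWithin_mono τ fun x hx => ne_of_gt hx)
  refine ge_of_tendsto hslope ?_
  filter_upwards [self_mem_nhdsWithin] with x hx
  have hx' : (τ : ℝ) < x := hx
  have h1 : 0 ≤ ρ x - ρ τ := sub_nonneg.2 (hρ.mono hx'.le)
  rw [slope_def_field]
  exact div_nonneg h1 (by linarith)

lemma slice_est {ρ : ℝ → ℝ} (hρ : IsElongationPlus ρ) (g g' : ℝ → ℝ)
    (hg : ∀ τ, HasDerivAt g (g' τ) τ) (hcg' : Continuous g')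
    (hint : Integrable (fun τ => (1 - ρ τ) * g' τ))
    (S L : ℝ) (hS : ∀ τ, g τ ≤ S) (hL : Tendsto g atBot (𝓝 L)) :
    ∫ τ, (1 - ρ τ) * g' τ ≤ S - L := by
  have hcρ : Continuous ρ := hρ.smooth.continuous
  have hcρ' : Continuous (deriv ρ) := hρ.smooth.continuous_deriv (by simp)
  have hcg : Continuous g := by
    rw [continuous_iff_continuousAt]; exact fun τ => (hg τ).continuousAt
  have hzero : ∀ τ ∉ Iic (1:ℝ), (1 - ρ τ) * g' τ = 0 := by
    intro τ hτ
    have h1 : (1:ℝ) ≤ τ := le_of_lt (by simpa using hτ)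
    simp [hρ.one τ h1]
  have hIic : ∫ τ in Iic (1:ℝ), (1 - ρ τ) * g' τ = ∫ τ, (1 - ρ τ) * g' τ :=
    setIntegral_eq_integral_of_forall_compl_eq_zero hzero
  have hTl : Tendsto (fun a => ∫ τ in a..(1:ℝ), (1 - ρ τ) * g' τ) atBot
      (𝓝 (∫ τ in Iic (1:ℝ), (1 - ρ τ) * g' τ)) :=
    intervalIntegral_tendsto_integral_Iic 1 hint.integrableOn tendsto_id
  have hTr : Tendsto (fun a => S - g a) atBot (𝓝 (S - L)) := tendsto_const_nhds.sub hL
  have hev : ∀ᶠ a in (atBot : Filter ℝ), (∫ τ in a..(1:ℝ), (1 - ρ τ) * g' τ) ≤ S - g a := by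
    filter_upwards [eventually_le_atBot (0:ℝ)] with a ha
    have hab : a ≤ (1:ℝ) := ha.trans one_pos.le
    have hibp : ∫ τ in a..(1:ℝ), (1 - ρ τ) * g' τ
        = (1 - ρ 1) * g 1 - (1 - ρ a) * g a - ∫ τ in a..(1:ℝ), (-deriv ρ τ) * g τ := by
      refine intervalIntegral.integral_mul_deriv_eq_deriv_mul_of_hasDerivAt
        ?_ ?_ ?_ ?_ ?_ ?_
      · exact (continuous_const.sub hcρ).continuousOn
      · exact hcg.continuousOn
      · intro x _
        simpa using (((hρ.smooth.differentiable (by simp)) x).hasDerivAt).const_sub 1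
      · intro x _; exact hg x
      · exact (hcρ'.neg).intervalIntegrable a 1
      · exact hcg'.intervalIntegrable a 1
    have hnegint : ∫ τ in a..(1:ℝ), (-deriv ρ τ) * g τ
        = -∫ τ in a..(1:ℝ), deriv ρ τ * g τ := by
      rw [← intervalIntegral.integral_neg]
      congr 1; funext τ; ring
    have hmono : ∫ τ in a..(1:ℝ), deriv ρ τ * g τ ≤ ∫ τ in a..(1:ℝ), deriv ρ τ * S := by
      refine intervalIntegral.integral_mono_on hab
        ((hcρ'.mul hcg).intervalIntegrable a 1)
        ((hcρ'.mul continuous_const).intervalIntegrable a 1) ?_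
      intro x _
      exact mul_le_mul_of_nonneg_left (hS x) (elong_deriv_nonneg hρ x)
    have hsum : ∫ τ in a..(1:ℝ), deriv ρ τ * S = S := by
      have hde : ∫ τ in a..(1:ℝ), deriv ρ τ = ρ 1 - ρ a :=
        intervalIntegral.integral_deriv_eq_sub
          (fun x _ => (hρ.smooth.differentiable (by simp)) x)
          (hcρ'.intervalIntegrable a 1)
      rw [intervalIntegral.integral_mul_const, hde, hρ.one 1 le_rfl, hρ.zero a ha]; ring
    rw [hibp, hnegint, hρ.one 1 le_rfl, hρ.zero a ha]
    have := hmono.trans_eq hsum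
    linarith
  have hfinal := le_of_tendsto_of_tendsto hTl hTr hev
  rw [hIic] at hfinal
  exact hfinal

lemma bddAbove_slice {H : ℝ → CE n → ℝ}
    (hc : Continuous (Function.uncurry H)) (hs : HasCompactSupport (Function.uncurry H))
    (t : ℝ) : BddAbove (Set.range (H t)) := by
  have hct : Continuous (H t) := hc.comp (Continuous.prodMk_right t)
  have hsub : Set.range (H t) ⊆ insert 0 (H t '' (Prod.snd '' tsupport (Function.uncurry H))) := by
    rintro y ⟨x, rfl⟩
    by_cases hx : H t x = 0
    · rw [hx]; exact Set.mem_insert _ _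
    · exact Set.mem_insert_of_mem _ ⟨x, ⟨(t, x), subset_tsupport _ hx, rfl⟩, rfl⟩
  have hK : IsCompact (Prod.snd '' tsupport (Function.uncurry H)) := hs.image continuous_snd
  exact ((hK.image hct).bddAbove.insert 0).mono hsub

lemma le_sup_slice {H : ℝ → CE n → ℝ}
    (hc : Continuous (Function.uncurry H)) (hs : HasCompactSupport (Function.uncurry H))
    (t : ℝ) (x : CE n) : H t x ≤ ⨆ y : CE n, H t y :=
  le_ciSup (by simpa [Set.range] using bddAbove_slice hc hs t) x

lemma sup_slice_continuous {H : ℝ → CE n → ℝ}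
    (hc : Continuous (Function.uncurry H)) (hs : HasCompactSupport (Function.uncurry H)) :
    Continuous (fun t => ⨆ x : CE n, H t x) := by
  have hUC : UniformContinuous (Function.uncurry H) :=
    hc.uniformContinuous_of_tendsto_cocompact hs.is_zero_at_infty
  rw [Metric.continuous_iff]
  intro t ε hε
  obtain ⟨δ, hδ, hδ'⟩ := Metric.uniformContinuous_iff.1 hUC (ε / 2) (by linarith)
  refine ⟨δ, hδ, fun s hst => ?_⟩
  have hkey : ∀ (a b : ℝ), dist a b < δ → ∀ x : CE n, H a x ≤ H b x + ε / 2 := by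
    intro a b hab x
    have hd : dist ((a, x) : ℝ × CE n) (b, x) < δ := by
      rw [Prod.dist_eq]; simpa [dist_self] using hab
    have h1 := hδ' hd
    have h2 := (abs_lt.1 (by simpa [Real.dist_eq] using h1)).2
    linarith
  have h1 : (⨆ x : CE n, H s x) ≤ (⨆ x : CE n, H t x) + ε / 2 := by
    refine ciSup_le fun x => (hkey s t hst x).trans (by
      have := le_sup_slice hc hs t x; linarith)
  have h2 : (⨆ x : CE n, H t x) ≤ (⨆ x : CE n, H s x) + ε / 2 := by
    refine ciSup_le fun x => (hkey t s (by rwa [dist_comm]) x).trans (by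
      have := le_sup_slice hc hs s x; linarith)
  rw [Real.dist_eq, abs_lt]
  constructor <;> linarith

end AuxLemmas

/-- Corollary 5.3, second inequality: for finite-energy solutions of the
`ρ₋ = 1 − ρ₊`-perturbed Cauchy–Riemann equation,
`∫u*ω − ∫₀¹ H(t, ℓ₋(t)) dt ≥ −∫₀¹ sup_x H(t,x) dt = −E⁺(H)`. -/
theorem action_bound_rho_minus {n : ℕ} (H : ℝ → CE n → ℝ) (ρ : ℝ → ℝ) (u : ℝ × ℝ → CE n)
    (ℓ : ℝ → CE n)
    (hHsmooth : ContDiff ℝ (⊤ : ℕ∞) (Function.uncurry H))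
    (hHsupp : HasCompactSupport (Function.uncurry H))
    (hρ : IsElongationPlus ρ)
    (hu : ContDiff ℝ (⊤ : ℕ∞) u)
    (hpde : SolvesCR H (fun τ => 1 - ρ τ) u)
    (hfin : IntegrableOn (enDensity H (fun τ => 1 - ρ τ) u) strip)
    (harea : IntegrableOn (fun p => symp (d1 u p) (d2 u p)) strip)
    (hdH : IntegrableOn (fun p => fderiv ℝ (H p.2) (u p) (d1 u p)) strip)
    (hℓ : Continuous ℓ)
    (hconv : TendstoUniformlyOn (fun τ t => u (τ, t)) ℓ Filter.atBot (Set.Icc 0 1)) :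
    (area u - (∫ t in (0:ℝ)..1, H t (ℓ t)) ≥ -∫ t in (0:ℝ)..1, ⨆ x : CE n, H t x) ∧
      ((-∫ t in (0:ℝ)..1, ⨆ x : CE n, H t x) = -Eplus H) := by
  classical
  refine ⟨?_, rfl⟩
  have hHc : Continuous (Function.uncurry H) := hHsmooth.continuous
  have hud : Differentiable ℝ u := hu.differentiable (by simp)
  set S : ℝ → ℝ := fun t => ⨆ x : CE n, H t x with hSdef
  set h : ℝ × ℝ → ℝ := fun p => (1 - ρ p.1) * fderiv ℝ (H p.2) (u p) (d1 u p) with hhdef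
  -- derivative of the first slice
  have hslice : ∀ p : ℝ × ℝ,
      HasDerivAt (fun s => u (s, p.2)) (fderiv ℝ u p ((1:ℝ), (0:ℝ))) p.1 := by
    intro p
    have hpair : HasDerivAt (fun s : ℝ => (s, p.2)) ((1:ℝ), (0:ℝ)) p.1 :=
      (hasDerivAt_id p.1).prodMk (hasDerivAt_const p.1 p.2)
    exact ((hud p).hasFDerivAt).comp_hasDerivAt p.1 hpair
  have hd1eq : ∀ p : ℝ × ℝ, d1 u p = fderiv ℝ u p ((1:ℝ), (0:ℝ)) := fun p => (hslice p).deriv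
  have hd1 : ∀ p : ℝ × ℝ, HasDerivAt (fun s => u (s, p.2)) (d1 u p) p.1 := by
    intro p; rw [hd1eq p]; exact hslice p
  have cont_d1 : Continuous (d1 u) := by
    have hc : Continuous fun p : ℝ × ℝ => fderiv ℝ u p ((1:ℝ), (0:ℝ)) :=
      (hu.continuous_fderiv (by simp)).clm_apply continuous_const
    have heq : (d1 u) = fun p : ℝ × ℝ => fderiv ℝ u p ((1:ℝ), (0:ℝ)) := funext hd1eq
    rw [heq]; exact hc
  have cont_fd : Continuous fun p : ℝ × ℝ => fderiv ℝ (H p.2) (u p) := by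
    have h1 : ContDiff ℝ (⊤ : ℕ∞) (Function.uncurry fun (p : ℝ × ℝ) (x : CE n) => H p.2 x) := by
      have heq : (Function.uncurry fun (p : ℝ × ℝ) (x : CE n) => H p.2 x)
          = (Function.uncurry H) ∘ (fun q : (ℝ × ℝ) × CE n => (q.1.2, q.2)) := rfl
      rw [heq]
      exact hHsmooth.comp ((contDiff_snd.comp contDiff_fst).prodMk contDiff_snd)
    have h2 : ContDiff ℝ 0 fun p : ℝ × ℝ => fderiv ℝ (H p.2) (u p) :=
      ContDiff.fderiv h1 (hu.of_le (by simp)) (by simp)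
    exact h2.continuous
  have cont_fda : Continuous fun p : ℝ × ℝ => fderiv ℝ (H p.2) (u p) (d1 u p) :=
    cont_fd.clm_apply cont_d1
  -- pointwise identity on the strip
  have meas_strip : MeasurableSet strip := MeasurableSet.univ.prod measurableSet_Icc
  have hpoint : ∀ p ∈ strip, symp (d1 u p) (d2 u p) = ‖d1 u p‖ ^ 2 - h p := by
    intro p hp
    have hp2 : p.2 ∈ Set.Icc (0:ℝ) 1 := (Set.mem_prod.1 hp).2
    have hpd := hpde p hp2
    have halg := key_alg (d1 u p) (d2 u p) (gradient (H p.2) (u p)) (1 - ρ p.1)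
      (by simpa [hamVF] using hpd)
    rw [symp, halg, hhdef]
    have hgrad : (inner (𝕜 := ℝ) (gradient (H p.2) (u p)) (d1 u p) : ℝ)
        = fderiv ℝ (H p.2) (u p) (d1 u p) := InnerProductSpace.toDual_symm_apply
    rw [hgrad]
  -- integrability
  have int_d1sq : IntegrableOn (fun p => ‖d1 u p‖ ^ 2) strip := by
    refine hfin.mono' ((cont_d1.norm.pow 2).aestronglyMeasurable) ?_
    refine Filter.Eventually.of_forall fun p => ?_
    rw [Real.norm_eq_abs, abs_of_nonneg (by positivity)]
    exact le_add_of_nonneg_right (by positivity)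
  have int_h : IntegrableOn h strip := by
    refine hdH.bdd_mul
      ((continuous_const.sub (hρ.smooth.continuous.comp continuous_fst)).aestronglyMeasurable)
      (c := 1) (Filter.Eventually.of_forall fun p => ?_)
    have hm := hρ.mem p.1
    rw [Real.norm_eq_abs, abs_le]
    exact ⟨by linarith [hm.2], by linarith [hm.1]⟩
  have area_eq : area u = (∫ p in strip, ‖d1 u p‖ ^ 2) - ∫ p in strip, h p := by
    rw [area, setIntegral_congr_fun meas_strip hpoint]
    exact integral_sub int_d1sq int_h
  have pos1 : 0 ≤ ∫ p in strip, ‖d1 u p‖ ^ 2 :=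
    integral_nonneg fun p => by positivity
  -- Fubini
  have hmeq : (volume : Measure (ℝ × ℝ)).restrict strip
      = (volume : Measure ℝ).prod ((volume : Measure ℝ).restrict (Set.Icc (0:ℝ) 1)) := by
    rw [strip, MeasureTheory.Measure.volume_eq_prod, ← Measure.prod_restrict,
      Measure.restrict_univ]
  have int_h' : Integrable h
      ((volume : Measure ℝ).prod ((volume : Measure ℝ).restrict (Set.Icc (0:ℝ) 1))) := by
    rw [← hmeq]; exact int_h
  have hfub : (∫ p in strip, h p) = ∫ t in Set.Icc (0:ℝ) 1, ∫ τ : ℝ, h (τ, t) := by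
    calc (∫ p in strip, h p)
        = ∫ p, h p ∂((volume : Measure ℝ).prod
            ((volume : Measure ℝ).restrict (Set.Icc (0:ℝ) 1))) := by rw [← hmeq]
      _ = ∫ t, (∫ τ, h (τ, t)) ∂((volume : Measure ℝ).restrict (Set.Icc (0:ℝ) 1)) :=
            MeasureTheory.integral_prod_symm h int_h'
  have hae_int : ∀ᵐ t ∂((volume : Measure ℝ).restrict (Set.Icc (0:ℝ) 1)),
      Integrable (fun τ => h (τ, t)) := int_h'.prod_left_ae
  have int_inner : Integrable (fun t => ∫ τ : ℝ, h (τ, t))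
      ((volume : Measure ℝ).restrict (Set.Icc (0:ℝ) 1)) := int_h'.integral_prod_right
  have contS : Continuous S := sup_slice_continuous hHc hHsupp
  have contHl : Continuous fun t => H t (ℓ t) := hHc.comp (continuous_id.prodMk hℓ)
  have hkey : ∀ t ∈ Set.Icc (0:ℝ) 1, Integrable (fun τ => h (τ, t)) →
      (∫ τ : ℝ, h (τ, t)) ≤ S t - H t (ℓ t) := by
    intro t ht hint
    have hHts : ContDiff ℝ (⊤ : ℕ∞) (H t) := by
      have heq : H t = (Function.uncurry H) ∘ (fun x : CE n => (t, x)) := rfl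
      rw [heq]; exact hHsmooth.comp (contDiff_const.prodMk contDiff_id)
    have hg' : ∀ τ : ℝ, HasDerivAt (fun s => H t (u (s, t)))
        (fderiv ℝ (H t) (u (τ, t)) (d1 u (τ, t))) τ := fun τ =>
      (((hHts.differentiable (by simp)) (u (τ, t))).hasFDerivAt).comp_hasDerivAt τ (hd1 (τ, t))
    have hcg' : Continuous fun τ => fderiv ℝ (H t) (u (τ, t)) (d1 u (τ, t)) :=
      cont_fda.comp (continuous_id.prodMk continuous_const)
    have hLt : Filter.Tendsto (fun τ => H t (u (τ, t))) Filter.atBot (nhds (H t (ℓ t))) :=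
      (hHts.continuous.tendsto (ℓ t)).comp (hconv.tendsto_at ht)
    have hest := slice_est hρ (fun τ => H t (u (τ, t)))
      (fun τ => fderiv ℝ (H t) (u (τ, t)) (d1 u (τ, t))) hg' hcg'
      (by simpa [hhdef] using hint) (S t) (H t (ℓ t))
      (fun τ => le_sup_slice hHc hHsupp t (u (τ, t))) hLt
    simpa [hhdef] using hest
  have hmono : (∫ t in Set.Icc (0:ℝ) 1, ∫ τ : ℝ, h (τ, t))
      ≤ ∫ t in Set.Icc (0:ℝ) 1, (S t - H t (ℓ t)) := by
    refine integral_mono_ae int_inner ((contS.sub contHl).integrableOn_Icc) ?_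
    filter_upwards [hae_int, ae_restrict_mem measurableSet_Icc] with t h1 h2
    exact hkey t h2 h1
  have hsplit : (∫ t in Set.Icc (0:ℝ) 1, (S t - H t (ℓ t)))
      = (∫ t in Set.Icc (0:ℝ) 1, S t) - ∫ t in Set.Icc (0:ℝ) 1, H t (ℓ t) :=
    integral_sub contS.integrableOn_Icc contHl.integrableOn_Icc
  have hi1 : (∫ t in (0:ℝ)..1, S t) = ∫ t in Set.Icc (0:ℝ) 1, S t := by
    rw [intervalIntegral.integral_of_le zero_le_one, integral_Icc_eq_integral_Ioc]
  have hi2 : (∫ t in (0:ℝ)..1, H t (ℓ t)) = ∫ t in Set.Icc (0:ℝ) 1, H t (ℓ t) := by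
    rw [intervalIntegral.integral_of_le zero_le_one, integral_Icc_eq_integral_Ioc]
  show area u - (∫ t in (0:ℝ)..1, H t (ℓ t)) ≥ -∫ t in (0:ℝ)..1, S t
  rw [area_eq, hi2, ge_iff_le, neg_le, hi1]
  linarith [pos1, hmono, hsplit, hfub]


end
end

section
/- Hofer-norm energy bound for the compactly-elongated equation (Proposition 5.4, transcribed to ℂⁿ): Let H : [0,1] × ℂⁿ → ℝ be a smooth compactly supported Hamiltonian, K ≥ 1, and ρ_K an elongation function of type ρ_K. Let u : ℝ × [0,1] → ℂⁿ be a smooth map solving ∂u/∂τ + i(∂u/∂t − ρ_K(τ)X_{H_t}(u(τ,t))) = 0 with finite energy E_{(H,ρ_K)}(u) < ∞. Assume that the improper integral ∫u*ω converges and that ∫_{ℝ×[0,1]} |dH_t(u(τ,t))[∂u/∂τ(τ,t)]| dτ dt < ∞. Then both of the following hold: (i) ∫u*ω ≥ −‖H‖, and (ii) E_{(H,ρ_K)}(u) ≤ ∫u*ω + ‖H‖. -/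
open MeasureTheory Set Filter

noncomputable section

/-! ### Auxiliary lemmas -/

lemma real_inner_eq_re {n : ℕ} (x y : CE n) :
    (inner (𝕜 := ℝ) x y : ℝ) = Complex.re (inner (𝕜 := ℂ) x y) := by
  simp [PiLp.inner_apply, Complex.re_sum]

lemma grad_inner' {n : ℕ} (f : CE n → ℝ) (x v : CE n) :
    inner (𝕜 := ℝ) (gradient f x) v = fderiv ℝ f x v := by
  rw [gradient, ← InnerProductSpace.toDual_apply_apply, LinearIsometryEquiv.apply_symm_apply]

lemma pointAlg {n : ℕ} (H : ℝ → CE n → ℝ) (ρ : ℝ → ℝ) (u : ℝ × ℝ → CE n) (p : ℝ × ℝ)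
    (hp : d1 u p + (Complex.I : ℂ) • (d2 u p - ρ p.1 • hamVF H p.2 (u p)) = 0) :
    enDensity H ρ u p
      = 2 * symp (d1 u p) (d2 u p) + 2 * (ρ p.1 * fderiv ℝ (H p.2) (u p) (d1 u p)) := by
  set a := d1 u p with ha
  set X := ρ p.1 • hamVF H p.2 (u p) with hX
  have hba : d2 u p - X = (Complex.I : ℂ) • a := by
    have h1 : (Complex.I : ℂ) • (d2 u p - X) = -a := by
      rw [eq_neg_iff_add_eq_zero, add_comm]; exact hp
    calc d2 u p - X = -((Complex.I : ℂ) • ((Complex.I : ℂ) • (d2 u p - X))) := by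
          rw [smul_smul, Complex.I_mul_I, neg_smul, one_smul, neg_neg]
      _ = (Complex.I : ℂ) • a := by rw [h1, smul_neg, neg_neg]
  have hsymp : symp a (d2 u p) = ‖a‖ ^ 2 - ρ p.1 * fderiv ℝ (H p.2) (u p) a := by
    have hd2 : d2 u p = (Complex.I : ℂ) • a + X := by rw [← hba]; abel
    rw [symp, hd2, inner_add_right, hX, real_inner_smul_right, hamVF]
    have h2 : inner (𝕜 := ℝ) ((Complex.I :ℂ) • a) ((Complex.I :ℂ) • a) = (‖a‖:ℝ) ^ 2 := by
      rw [real_inner_eq_re, inner_smul_left, inner_smul_right]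
      rw [inner_self_eq_norm_sq_to_K]
      simp [← Complex.ofReal_pow]
    have h3 : inner (𝕜 := ℝ) ((Complex.I :ℂ) • a) ((-Complex.I :ℂ) • gradient (H p.2) (u p))
        = -(inner (𝕜 := ℝ) a (gradient (H p.2) (u p)) : ℝ) := by
      rw [real_inner_eq_re, real_inner_eq_re, inner_smul_left, inner_smul_right]
      simp
    rw [h2, h3, real_inner_comm, grad_inner']
    ring
  have hnorm : ‖d2 u p - X‖ = ‖a‖ := by
    rw [hba, norm_smul, Complex.norm_I, one_mul]
  rw [enDensity, ← hX, hnorm, hsymp]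
  ring

lemma keybound {K : ℝ} {ρ : ℝ → ℝ} (hK : 1 ≤ K) (hρ : IsElongationK K ρ)
    {g g' : ℝ → ℝ} {m M : ℝ}
    (hg : ∀ τ, HasDerivAt g (g' τ) τ) (hg' : Continuous g')
    (hm : ∀ τ, m ≤ g τ) (hM : ∀ τ, g τ ≤ M) :
    ∫ τ, ρ τ * g' τ ≤ M - m := by
  have hgc : Continuous g := by
    rw [continuous_iff_continuousAt]; exact fun τ => (hg τ).continuousAt
  have hdc : Continuous (deriv ρ) := hρ.smooth.continuous_deriv (by simp)
  have hρd : ∀ τ, HasDerivAt ρ (deriv ρ τ) τ :=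
    fun τ => (hρ.smooth.differentiable (by simp) τ).hasDerivAt
  have hKK : -K ≤ K := by linarith
  have hρK : ρ K = 0 := hρ.zero K (le_abs_self K)
  have hρmK : ρ (-K) = 0 := hρ.zero (-K) (by rw [abs_neg]; exact le_abs_self K)
  have hρ1 : ρ (-K + 1) = 1 := hρ.one _ (abs_le.2 ⟨by linarith, by linarith⟩)
  have hρ2 : ρ (K - 1) = 1 := hρ.one _ (abs_le.2 ⟨by linarith, by linarith⟩)
  -- reduce to an interval integral
  have e1 : ∫ τ, ρ τ * g' τ = ∫ τ in (-K)..K, ρ τ * g' τ := by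
    rw [intervalIntegral.integral_of_le hKK, ← integral_Icc_eq_integral_Ioc]
    refine (setIntegral_eq_integral_of_forall_compl_eq_zero fun x hx => ?_).symm
    rw [Set.mem_Icc, ← abs_le, not_le] at hx
    rw [hρ.zero x hx.le, zero_mul]
  -- integration by parts
  have e2 : ∫ τ in (-K)..K, ρ τ * g' τ = -∫ τ in (-K)..K, deriv ρ τ * g τ := by
    rw [intervalIntegral.integral_mul_deriv_eq_deriv_mul (fun x _ => hρd x) (fun x _ => hg x)
      (hdc.intervalIntegrable _ _) (hg'.intervalIntegrable _ _), hρK, hρmK]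
    ring
  -- split into three intervals
  have ii : ∀ a b : ℝ, IntervalIntegrable (fun τ => deriv ρ τ * g τ) volume a b :=
    fun a b => (hdc.mul hgc).intervalIntegrable a b
  have e3 : ∫ τ in (-K)..K, deriv ρ τ * g τ
      = (∫ τ in (-K)..(-K+1), deriv ρ τ * g τ) + (∫ τ in (-K+1)..(K-1), deriv ρ τ * g τ)
        + ∫ τ in (K-1)..K, deriv ρ τ * g τ := by
    rw [intervalIntegral.integral_add_adjacent_intervals (ii _ _) (ii _ _),
      intervalIntegral.integral_add_adjacent_intervals (ii _ _) (ii _ _)]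
  -- the middle integral vanishes
  have emid : ∫ τ in (-K+1)..(K-1), deriv ρ τ * g τ = 0 := by
    have hae : ∀ᵐ τ : ℝ, τ ≠ K - 1 := by
      rw [ae_iff]
      simpa using measure_singleton (K - 1)
    rw [intervalIntegral.integral_congr_ae (g := fun _ => (0:ℝ)) ?_, intervalIntegral.integral_zero]
    filter_upwards [hae] with τ hτ hmem
    rw [Set.uIoc_of_le (by linarith), Set.mem_Ioc] at hmem
    have hlt : τ < K - 1 := lt_of_le_of_ne hmem.2 hτ
    have : deriv ρ τ = 0 := by
      have hev : ρ =ᶠ[nhds τ] fun _ => 1 := by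
        refine Filter.eventually_of_mem (Ioo_mem_nhds hmem.1 hlt) fun s hs => ?_
        exact hρ.one s (abs_le.2 ⟨by linarith [hs.1], by linarith [hs.2]⟩)
      rw [hev.deriv_eq, deriv_const]
    rw [this, zero_mul]
  -- first piece
  have b1 : m ≤ ∫ τ in (-K)..(-K+1), deriv ρ τ * g τ := by
    have hfund : ∫ τ in (-K)..(-K+1), deriv ρ τ = 1 := by
      rw [intervalIntegral.integral_deriv_eq_sub
        (fun x _ => (hρ.smooth.differentiable (by simp) x)) (hdc.intervalIntegrable _ _), hρ1, hρmK]
      ring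
    have hmono : ∫ τ in (-K)..(-K+1), deriv ρ τ * m ≤ ∫ τ in (-K)..(-K+1), deriv ρ τ * g τ := by
      refine intervalIntegral.integral_mono_on (by linarith)
        ((hdc.mul continuous_const).intervalIntegrable _ _) (ii _ _) fun x hx => ?_
      exact mul_le_mul_of_nonneg_left (hm x) (hρ.incr x hx)
    calc m = (∫ τ in (-K)..(-K+1), deriv ρ τ) * m := by rw [hfund, one_mul]
      _ = ∫ τ in (-K)..(-K+1), deriv ρ τ * m := by rw [intervalIntegral.integral_mul_const]
      _ ≤ _ := hmono
  -- last piece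
  have b2 : -M ≤ ∫ τ in (K-1)..K, deriv ρ τ * g τ := by
    have hfund : ∫ τ in (K-1)..K, deriv ρ τ = -1 := by
      rw [intervalIntegral.integral_deriv_eq_sub
        (fun x _ => (hρ.smooth.differentiable (by simp) x)) (hdc.intervalIntegrable _ _), hρK, hρ2]
      ring
    have hmono : ∫ τ in (K-1)..K, deriv ρ τ * M ≤ ∫ τ in (K-1)..K, deriv ρ τ * g τ := by
      refine intervalIntegral.integral_mono_on (by linarith)
        ((hdc.mul continuous_const).intervalIntegrable _ _) (ii _ _) fun x hx => ?_
      exact mul_le_mul_of_nonpos_left (hM x) (hρ.decr x hx)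
    calc -M = (∫ τ in (K-1)..K, deriv ρ τ) * M := by rw [hfund]; ring
      _ = ∫ τ in (K-1)..K, deriv ρ τ * M := by rw [intervalIntegral.integral_mul_const]
      _ ≤ _ := hmono
  rw [e1, e2, e3, emid]
  linarith

lemma supCont {n : ℕ} {H : ℝ → CE n → ℝ} (hc : Continuous (Function.uncurry H))
    (hs : HasCompactSupport (Function.uncurry H)) {C : ℝ}
    (hC : ∀ t x, |H t x| ≤ C) :
    Continuous fun t => ⨆ x : CE n, H t x := by
  haveI : Nonempty (CE n) := ⟨0⟩
  have hbdd : ∀ t, BddAbove (Set.range (H t)) := fun t =>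
    ⟨C, by rintro y ⟨x, rfl⟩; exact le_of_abs_le (hC t x)⟩
  have hu := hs.uniformContinuous_of_continuous hc
  rw [Metric.uniformContinuous_iff] at hu
  rw [Metric.continuous_iff]
  intro t ε hε
  obtain ⟨δ, hδ, h⟩ := hu (ε/2) (by linarith)
  refine ⟨δ, hδ, fun s hst => ?_⟩
  have key : ∀ a b : ℝ, dist a b < δ → ∀ x, H a x ≤ H b x + ε/2 := by
    intro a b hab x
    have h2 : dist (Function.uncurry H (a,x)) (Function.uncurry H (b,x)) < ε/2 := by
      apply h
      rw [Prod.dist_eq]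
      simp only [dist_self]
      exact lt_of_le_of_lt (by simp [dist_nonneg]) hab
    have h3 : |H a x - H b x| < ε / 2 := by
      simpa [Real.dist_eq, Function.uncurry] using h2
    linarith [(abs_sub_lt_iff.1 h3).1]
  have k1 : (⨆ x, H s x) ≤ (⨆ x, H t x) + ε/2 :=
    ciSup_le fun x => (key s t hst x).trans
      (add_le_add_left (le_ciSup (hbdd t) x) _)
  have k2 : (⨆ x, H t x) ≤ (⨆ x, H s x) + ε/2 :=
    ciSup_le fun x => (key t s (by rwa [dist_comm]) x).trans
      (add_le_add_left (le_ciSup (hbdd s) x) _)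
  rw [Real.dist_eq]
  rw [abs_sub_lt_iff]
  constructor <;> linarith

lemma infCont {n : ℕ} {H : ℝ → CE n → ℝ} (hc : Continuous (Function.uncurry H))
    (hs : HasCompactSupport (Function.uncurry H)) {C : ℝ}
    (hC : ∀ t x, |H t x| ≤ C) :
    Continuous fun t => ⨅ x : CE n, H t x := by
  haveI : Nonempty (CE n) := ⟨0⟩
  have hbdd : ∀ t, BddBelow (Set.range (H t)) := fun t =>
    ⟨-C, by rintro y ⟨x, rfl⟩; exact neg_le_of_abs_le (hC t x)⟩
  have hu := hs.uniformContinuous_of_continuous hc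
  rw [Metric.uniformContinuous_iff] at hu
  rw [Metric.continuous_iff]
  intro t ε hε
  obtain ⟨δ, hδ, h⟩ := hu (ε/2) (by linarith)
  refine ⟨δ, hδ, fun s hst => ?_⟩
  have key : ∀ a b : ℝ, dist a b < δ → ∀ x, H a x ≤ H b x + ε/2 := by
    intro a b hab x
    have h2 : dist (Function.uncurry H (a,x)) (Function.uncurry H (b,x)) < ε/2 := by
      apply h
      rw [Prod.dist_eq]
      simp only [dist_self]
      exact lt_of_le_of_lt (by simp [dist_nonneg]) hab
    have h3 : |H a x - H b x| < ε / 2 := by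
      simpa [Real.dist_eq, Function.uncurry] using h2
    linarith [(abs_sub_lt_iff.1 h3).1]
  have k1 : (⨅ x, H t x) - ε/2 ≤ ⨅ x, H s x :=
    le_ciInf fun x => by linarith [ciInf_le (hbdd t) x, key t s (by rwa [dist_comm]) x]
  have k2 : (⨅ x, H s x) - ε/2 ≤ ⨅ x, H t x :=
    le_ciInf fun x => by linarith [ciInf_le (hbdd s) x, key s t hst x]
  rw [Real.dist_eq, abs_sub_lt_iff]
  constructor <;> linarith

lemma chainAndCont {n : ℕ} {H : ℝ → CE n → ℝ} {u : ℝ × ℝ → CE n}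
    (hH : ContDiff ℝ (⊤ : ℕ∞) (Function.uncurry H)) (hu : ContDiff ℝ (⊤ : ℕ∞) u) (t : ℝ) :
    (∀ τ, HasDerivAt (fun s => H t (u (s, t))) (fderiv ℝ (H t) (u (τ, t)) (d1 u (τ, t))) τ)
      ∧ Continuous (fun τ => fderiv ℝ (H t) (u (τ, t)) (d1 u (τ, t))) := by
  have hut : ContDiff ℝ (⊤ : ℕ∞) (fun s : ℝ => u (s, t)) := hu.comp (contDiff_id.prodMk contDiff_const)
  have hder : ∀ τ, HasDerivAt (fun s => u (s, t)) (d1 u (τ, t)) τ :=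
    fun τ => ((hut.differentiable (by simp)) τ).hasDerivAt
  have hHt : ContDiff ℝ (⊤ : ℕ∞) (H t) := hH.comp (contDiff_const.prodMk contDiff_id)
  refine ⟨fun τ => ?_, ?_⟩
  · exact (((hHt.differentiable (by simp)) (u (τ, t))).hasFDerivAt).comp_hasDerivAt τ (hder τ)
  · have c1 : Continuous fun τ : ℝ => u (τ, t) := hut.continuous
    have c2 : Continuous fun τ : ℝ => d1 u (τ, t) := hut.continuous_deriv (by simp)
    exact ((hHt.continuous_fderiv (by simp)).comp c1).clm_apply c2

/-- Proposition 5.4: for finite-energy solutions of the `ρ_K`-perturbed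
Cauchy–Riemann equation, `∫u*ω ≥ −‖H‖` and `E_{(H,ρ_K)}(u) ≤ ∫u*ω + ‖H‖`. -/
theorem hofer_energy_bound {n : ℕ} (H : ℝ → CE n → ℝ) (K : ℝ) (ρ : ℝ → ℝ)
    (u : ℝ × ℝ → CE n)
    (hHsmooth : ContDiff ℝ (⊤ : ℕ∞) (Function.uncurry H))
    (hHsupp : HasCompactSupport (Function.uncurry H))
    (hK : 1 ≤ K)
    (hρ : IsElongationK K ρ)
    (hu : ContDiff ℝ (⊤ : ℕ∞) u)
    (hpde : SolvesCR H ρ u)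
    (hfin : IntegrableOn (enDensity H ρ u) strip)
    (harea : IntegrableOn (fun p => symp (d1 u p) (d2 u p)) strip)
    (hdH : IntegrableOn (fun p => fderiv ℝ (H p.2) (u p) (d1 u p)) strip) :
    -(hoferNorm H) ≤ area u ∧ energy H ρ u ≤ area u + hoferNorm H := by
  classical
  haveI : Nonempty (CE n) := ⟨0⟩
  obtain ⟨C, hC⟩ := hHsupp.exists_bound_of_continuous hHsmooth.continuous
  have hC' : ∀ t x, |H t x| ≤ C := fun t x => by
    simpa [Function.uncurry, Real.norm_eq_abs] using hC (t, x)
  have hbddA : ∀ t, BddAbove (Set.range (H t)) := fun t =>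
    ⟨C, by rintro y ⟨x, rfl⟩; exact le_of_abs_le (hC' t x)⟩
  have hbddB : ∀ t, BddBelow (Set.range (H t)) := fun t =>
    ⟨-C, by rintro y ⟨x, rfl⟩; exact neg_le_of_abs_le (hC' t x)⟩
  set G : ℝ × ℝ → ℝ := fun p => ρ p.1 * fderiv ℝ (H p.2) (u p) (d1 u p) with hGdef
  have hstripm : MeasurableSet strip := MeasurableSet.univ.prod measurableSet_Icc
  -- integrability of G on the strip
  have hGint : IntegrableOn G strip := by
    refine Integrable.bdd_mul (c := 1) hdH ?_ (Eventually.of_forall fun p => ?_)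
    · exact ((hρ.smooth.continuous).comp continuous_fst).aestronglyMeasurable
    · rw [Real.norm_eq_abs, abs_le]
      exact ⟨by linarith [(hρ.mem p.1).1], (hρ.mem p.1).2⟩
  -- energy identity
  have hen : ∫ p in strip, enDensity H ρ u p = 2 * area u + 2 * ∫ p in strip, G p := by
    have hpt : EqOn (enDensity H ρ u)
        (fun p => 2 * symp (d1 u p) (d2 u p) + 2 * G p) strip :=
      fun p hp => pointAlg H ρ u p (hpde p hp.2)
    rw [setIntegral_congr_fun hstripm hpt,
      integral_add (harea.const_mul 2) (hGint.const_mul 2),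
      integral_const_mul, integral_const_mul, area]
  have henergy : energy H ρ u = area u + ∫ p in strip, G p := by
    rw [energy, hen]; ring
  have hpos : 0 ≤ ∫ p in strip, enDensity H ρ u p := by
    refine setIntegral_nonneg hstripm fun p _ => ?_
    rw [enDensity]
    positivity
  have hEnn : 0 ≤ energy H ρ u := by
    rw [energy]; linarith
  -- the key bound ∫ G ≤ ‖H‖
  have hmain : (∫ p in strip, G p) ≤ hoferNorm H := by
    have hmeq : (volume : Measure ℝ).prod (volume.restrict (Icc (0:ℝ) 1))
        = (volume : Measure (ℝ × ℝ)).restrict strip := by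
      rw [Measure.volume_eq_prod, strip, ← Measure.prod_restrict, Measure.restrict_univ]
    have hGint' : Integrable G ((volume : Measure ℝ).prod (volume.restrict (Icc (0:ℝ) 1))) := by
      rw [hmeq]; exact hGint
    have e1 : ∫ p in strip, G p = ∫ t in Icc (0:ℝ) 1, ∫ τ : ℝ, G (τ, t) := by
      rw [← hmeq, MeasureTheory.integral_prod_symm _ hGint']
    have hsec : ∀ t ∈ Icc (0:ℝ) 1,
        (∫ τ : ℝ, G (τ, t)) ≤ (⨆ x : CE n, H t x) - ⨅ x : CE n, H t x := by
      intro t _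
      obtain ⟨hchain, hcont⟩ := chainAndCont hHsmooth hu t
      exact keybound hK hρ hchain hcont
        (fun τ => ciInf_le (hbddB t) (u (τ, t)))
        (fun τ => le_ciSup (hbddA t) (u (τ, t)))
    have hScont : Continuous fun t => ⨆ x : CE n, H t x := supCont hHsmooth.continuous hHsupp hC'
    have hIcont : Continuous fun t => ⨅ x : CE n, H t x := infCont hHsmooth.continuous hHsupp hC'
    have hSI : IntegrableOn (fun t => (⨆ x : CE n, H t x) - ⨅ x : CE n, H t x)
        (Icc (0:ℝ) 1) := (hScont.sub hIcont).integrableOn_Icc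
    have hInner : IntegrableOn (fun t => ∫ τ : ℝ, G (τ, t)) (Icc (0:ℝ) 1) :=
      hGint'.integral_prod_right
    have e2 : ∫ t in Icc (0:ℝ) 1, (∫ τ : ℝ, G (τ, t))
        ≤ ∫ t in Icc (0:ℝ) 1, ((⨆ x : CE n, H t x) - ⨅ x : CE n, H t x) :=
      setIntegral_mono_on hInner hSI measurableSet_Icc hsec
    have e3 : ∫ t in Icc (0:ℝ) 1, ((⨆ x : CE n, H t x) - ⨅ x : CE n, H t x) = hoferNorm H := by
      rw [integral_sub hScont.integrableOn_Icc hIcont.integrableOn_Icc, hoferNorm, Eplus, Eminus,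
        intervalIntegral.integral_of_le (zero_le_one), intervalIntegral.integral_of_le (zero_le_one),
        integral_Icc_eq_integral_Ioc, integral_Icc_eq_integral_Ioc]
      ring
    rw [e1]
    linarith
  constructor
  · linarith
  · linarith

end
end

section
/- Coordinate change on the second factor preserves the action functional up to a constant (Lemma 4.3 / Lemma lem:gH1+, transcribed to ℂⁿ): Let H : [0,1] × ℂⁿ → ℝ be a smooth compactly supported Hamiltonian with flow φ_H^t, and define H̃(t,x) := −H(1−t, x). Let w′ : [0,1] × [0,1] → ℂⁿ be any smooth map and define w(s,t) := φ_H^{1−t}((φ_H^1)⁻¹(w′(s,t))). Then ∫_{[0,1]²} w*ω + ∫₀¹ H̃(t, w(1,t)) dt = ∫_{[0,1]²} (w′)*ω + ∫₀¹ H̃(t, w(0,t)) dt, where for a smooth map v : [0,1]² → ℂⁿ, ∫v*ω = ∫_{[0,1]²} ω(∂v/∂s, ∂v/∂t) ds dt. -/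
open MeasureTheory Set Filter

noncomputable section

/-- The unit square `[0,1] × [0,1]`. -/
def square : Set (ℝ × ℝ) := Set.Icc (0 : ℝ) 1 ×ˢ Set.Icc (0 : ℝ) 1

/-- The symplectic area `∫ v*ω` of a map of the unit square. -/
def areaSq {n : ℕ} (v : ℝ × ℝ → CE n) : ℝ := ∫ p in square, symp (d1 v p) (d2 v p)


/-! ### Auxiliary lemmas -/

section Aux

variable {E : Type*} [NormedAddCommGroup E] [NormedSpace ℝ E]
  {F : Type*} [NormedAddCommGroup F] [NormedSpace ℝ F]

lemma fderiv_slice_space' {f : ℝ × E → F} (hf : Differentiable ℝ f) (q : ℝ × E) (v : E) :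
    fderiv ℝ f q (0, v) = fderiv ℝ (fun y => f (q.1, y)) q.2 v := by
  have h1 : HasFDerivAt (fun y => f (q.1, y))
      ((fderiv ℝ f q).comp (ContinuousLinearMap.inr ℝ ℝ E)) q.2 :=
    (hf q).hasFDerivAt.comp q.2 (hasFDerivAt_prodMk_right q.1 q.2)
  rw [h1.fderiv]; rfl

lemma hasDerivAt_slice_time {f : ℝ × E → F} (hf : Differentiable ℝ f) (r : ℝ) (x : E) :
    HasDerivAt (fun s => f (s, x)) (fderiv ℝ f (r, x) (1, 0)) r := by
  have hline : HasDerivAt (fun s : ℝ => (s, x)) ((1:ℝ), (0:E)) r :=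
    (hasDerivAt_id r).prodMk (hasDerivAt_const r x)
  exact (hf (r, x)).hasFDerivAt.comp_hasDerivAt r hline

lemma deriv_commute {f : ℝ × E → F} (hf : ContDiff ℝ (⊤ : ℕ∞) f) (r : ℝ) (x : E) (a : E) :
    HasDerivAt (fun s => fderiv ℝ f (s, x) (0, a))
      (fderiv ℝ (fun q : ℝ × E => fderiv ℝ f q (1, 0)) (r, x) (0, a)) r := by
  have hF : ContDiff ℝ (⊤ : ℕ∞) (fderiv ℝ f) := hf.fderiv_right (by simp)
  have h1 : HasDerivAt (fun s => fderiv ℝ f (s, x))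
      (fderiv ℝ (fderiv ℝ f) (r, x) (1, 0)) r :=
    hasDerivAt_slice_time (hF.differentiable (by simp)) r x
  have h2 : HasDerivAt (fun s => fderiv ℝ f (s, x) (0, a))
      ((fderiv ℝ (fderiv ℝ f) (r, x) (1, 0)) (0, a)) r := by
    have h2' := h1.clm_apply (hasDerivAt_const r ((0:ℝ), a))
    simpa using h2'
  have hsymm : (fderiv ℝ (fderiv ℝ f) (r, x) (1, 0)) (0, a)
      = (fderiv ℝ (fderiv ℝ f) (r, x) (0, a)) (1, 0) := by
    have := hf.contDiffAt.isSymmSndFDerivAt (x := (r, x)) (by norm_num; exact WithTop.coe_le_coe.mpr le_top)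
    exact this _ _
  have h3 : fderiv ℝ (fun q : ℝ × E => fderiv ℝ f q (1, 0)) (r, x)
      = (ContinuousLinearMap.apply ℝ F ((1:ℝ), (0:E))).comp (fderiv ℝ (fderiv ℝ f) (r, x)) := by
    exact (((ContinuousLinearMap.apply ℝ F ((1:ℝ),(0:E))).hasFDerivAt).comp (r, x)
      ((hF.differentiable (by simp) _).hasFDerivAt)).fderiv
  rw [h3]
  simp only [ContinuousLinearMap.coe_comp', Function.comp_apply, ContinuousLinearMap.apply_apply]
  rw [← hsymm] at *
  · exact h2

lemma hasDerivAt_slice_d1 {u : ℝ × ℝ → F} (hu : Differentiable ℝ u) (p : ℝ × ℝ) :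
    HasDerivAt (fun s => u (s, p.2)) (fderiv ℝ u p (1, 0)) p.1 := by
  have := hasDerivAt_slice_time hu p.1 p.2
  simpa using this

lemma hasDerivAt_slice_d2 {u : ℝ × ℝ → F} (hu : Differentiable ℝ u) (p : ℝ × ℝ) :
    HasDerivAt (fun t => u (p.1, t)) (fderiv ℝ u p (0, 1)) p.2 := by
  have hline : HasDerivAt (fun t : ℝ => (p.1, t)) ((0:ℝ), (1:ℝ)) p.2 :=
    (hasDerivAt_const p.2 p.1).prodMk (hasDerivAt_id p.2)
  have := (hu p).hasFDerivAt.comp_hasDerivAt p.2 hline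
  exact this

lemma d1_eq_fderiv {n : ℕ} {u : ℝ × ℝ → CE n} (hu : Differentiable ℝ u) (p : ℝ × ℝ) :
    d1 u p = fderiv ℝ u p (1, 0) := (hasDerivAt_slice_d1 hu p).deriv

lemma d2_eq_fderiv {n : ℕ} {u : ℝ × ℝ → CE n} (hu : Differentiable ℝ u) (p : ℝ × ℝ) :
    d2 u p = fderiv ℝ u p (0, 1) := (hasDerivAt_slice_d2 hu p).deriv

lemma d1_hasDerivAt {n : ℕ} {u : ℝ × ℝ → CE n} (hu : Differentiable ℝ u) (p : ℝ × ℝ) :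
    HasDerivAt (fun s => u (s, p.2)) (d1 u p) p.1 := by
  rw [d1_eq_fderiv hu p]; exact hasDerivAt_slice_d1 hu p

lemma d2_hasDerivAt {n : ℕ} {u : ℝ × ℝ → CE n} (hu : Differentiable ℝ u) (p : ℝ × ℝ) :
    HasDerivAt (fun t => u (p.1, t)) (d2 u p) p.2 := by
  rw [d2_eq_fderiv hu p]; exact hasDerivAt_slice_d2 hu p

end Aux

section SympAux

variable {n : ℕ}

lemma real_inner_re (v w : CE n) : inner (𝕜:=ℝ) v w = Complex.re (inner (𝕜:=ℂ) v w) := by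
  simp [inner]

lemma symp_negI_left (a b : CE n) : symp ((-Complex.I:ℂ) • a) b = inner (𝕜:=ℝ) a b := by
  unfold symp
  rw [smul_smul]
  norm_num [Complex.I_mul_I]

lemma symp_negI_right (a b : CE n) : symp a ((-Complex.I:ℂ) • b) = - inner (𝕜:=ℝ) a b := by
  unfold symp
  rw [real_inner_re, real_inner_re, inner_smul_left, inner_smul_right]
  simp [Complex.I_mul_I]

lemma symp_sub_right (v a b : CE n) : symp v (a - b) = symp v a - symp v b := by
  unfold symp; exact inner_sub_right _ _ _

lemma symp_hasDerivAt {f g : ℝ → CE n} {f' g' : CE n} {x : ℝ}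
    (hf : HasDerivAt f f' x) (hg : HasDerivAt g g' x) :
    HasDerivAt (fun s => symp (f s) (g s)) (symp (f x) g' + symp f' (g x)) x := by
  have hIf : HasDerivAt (fun s => (Complex.I : ℂ) • f s) ((Complex.I : ℂ) • f') x :=
    by have := hf.const_smul (Complex.I : ℂ); exact this
  exact (hIf.inner (𝕜 := ℝ) hg)

lemma symp_continuous {f g : ℝ × ℝ → CE n} (hf : Continuous f) (hg : Continuous g) :
    Continuous fun p => symp (f p) (g p) := by
  unfold symp
  exact Continuous.inner (hf.const_smul (Complex.I : ℂ)) hg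

lemma inner_gradient (f : CE n → ℝ) (z u : CE n) :
    inner (𝕜:=ℝ) (gradient f z) u = fderiv ℝ f z u := by
  rw [gradient]
  exact InnerProductSpace.toDual_symm_apply

lemma hessian_symm (f : CE n → ℝ) (hf : ContDiff ℝ (⊤ : ℕ∞) f) (y u v : CE n) :
    inner (𝕜:=ℝ) (fderiv ℝ (gradient f) y v) u = inner (𝕜:=ℝ) (fderiv ℝ (gradient f) y u) v := by
  have hgrad : ContDiff ℝ (⊤ : ℕ∞) (gradient f) := by
    have heq : gradient f = fun z => (InnerProductSpace.toDual ℝ (CE n)).symm (fderiv ℝ f z) :=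
      funext fun z => rfl
    rw [heq]
    exact ((InnerProductSpace.toDual ℝ (CE n)).symm.contDiff).comp (hf.fderiv_right (by simp))
  have key : ∀ v u : CE n,
      inner (𝕜:=ℝ) (fderiv ℝ (gradient f) y v) u = fderiv ℝ (fderiv ℝ f) y v u := by
    intro v u
    have h1 : HasFDerivAt (fun z => inner (𝕜:=ℝ) (gradient f z) u)
        (((innerSL ℝ (E := CE n)).flip u).comp (fderiv ℝ (gradient f) y)) y := by
      exact (((innerSL ℝ (E := CE n)).flip u).hasFDerivAt).comp y
        ((hgrad.differentiable (by simp) y).hasFDerivAt)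
    have h2 : HasFDerivAt (fun z => fderiv ℝ f z u)
        ((ContinuousLinearMap.apply ℝ ℝ u).comp (fderiv ℝ (fderiv ℝ f) y)) y := by
      exact ((ContinuousLinearMap.apply ℝ ℝ u).hasFDerivAt).comp y
        (((hf.fderiv_right (m := (⊤ : ℕ∞)) (by simp)).differentiable (by simp) y).hasFDerivAt)
    have heq : (fun z => inner (𝕜:=ℝ) (gradient f z) u) = (fun z => fderiv ℝ f z u) :=
      funext fun z => inner_gradient f z u
    rw [heq] at h1
    have := h1.unique h2
    calc inner (𝕜:=ℝ) (fderiv ℝ (gradient f) y v) u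
        = (((innerSL ℝ (E := CE n)).flip u).comp (fderiv ℝ (gradient f) y)) v := rfl
      _ = ((ContinuousLinearMap.apply ℝ ℝ u).comp (fderiv ℝ (fderiv ℝ f) y)) v := by rw [this]
      _ = fderiv ℝ (fderiv ℝ f) y v u := rfl
  rw [key v u, key u v]
  exact (hf.contDiffAt.isSymmSndFDerivAt (by norm_num; exact WithTop.coe_le_coe.mpr le_top)) v u

lemma hamVF_smooth {H : ℝ → CE n → ℝ} (hH : ContDiff ℝ (⊤ : ℕ∞) (Function.uncurry H)) :
    ContDiff ℝ (⊤ : ℕ∞) (fun q : ℝ × CE n => hamVF H q.1 q.2) := by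
  have hfd : ContDiff ℝ (⊤ : ℕ∞) (fun q : ℝ × CE n => fderiv ℝ (Function.uncurry H) q) :=
    hH.fderiv_right (by simp)
  have hcomp : ContDiff ℝ (⊤ : ℕ∞) (fun q : ℝ × CE n =>
      (fderiv ℝ (Function.uncurry H) q).comp (ContinuousLinearMap.inr ℝ ℝ (CE n))) :=
    hfd.clm_comp contDiff_const
  have hgrad : ContDiff ℝ (⊤ : ℕ∞) (fun q : ℝ × CE n => gradient (H q.1) q.2) := by
    have heq : (fun q : ℝ × CE n => gradient (H q.1) q.2)
        = fun q : ℝ × CE n => (InnerProductSpace.toDual ℝ (CE n)).symm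
          ((fderiv ℝ (Function.uncurry H) q).comp (ContinuousLinearMap.inr ℝ ℝ (CE n))) := by
      funext q
      rw [gradient]
      congr 1
      have h1 : HasFDerivAt (fun y : CE n => (q.1, y)) (ContinuousLinearMap.inr ℝ ℝ (CE n)) q.2 :=
        hasFDerivAt_prodMk_right q.1 q.2
      have h2 := ((hH.differentiable (by simp)).differentiableAt (x := (q.1, q.2))).hasFDerivAt
      exact (h2.comp q.2 h1).fderiv
    rw [heq]
    exact ((InnerProductSpace.toDual ℝ (CE n)).symm.contDiff).comp hcomp
  exact hgrad.const_smul _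

lemma fderiv_hamVF_slice {H : ℝ → CE n → ℝ} (hH : ContDiff ℝ (⊤ : ℕ∞) (Function.uncurry H))
    (r : ℝ) (y v : CE n) :
    fderiv ℝ (fun z => hamVF H r z) y v
      = (-Complex.I : ℂ) • fderiv ℝ (gradient (H r)) y v := by
  have hHr : ContDiff ℝ (⊤ : ℕ∞) (H r) := hH.comp (contDiff_const.prodMk contDiff_id)
  have hgrad : ContDiff ℝ (⊤ : ℕ∞) (gradient (H r)) :=
    ((InnerProductSpace.toDual ℝ (CE n)).symm.contDiff).comp (hHr.fderiv_right (by simp))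
  have hd : HasFDerivAt (fun z => hamVF H r z)
      ((-Complex.I : ℂ) • fderiv ℝ (gradient (H r)) y) y :=
    by have := ((hgrad.differentiable (by simp) y).hasFDerivAt).const_smul (-Complex.I : ℂ); exact this
  rw [hd.fderiv]; rfl

end SympAux

section FlowAux

variable {n : ℕ} {H : ℝ → CE n → ℝ} {φ : ℝ → CE n ≃ CE n}

lemma fderiv_flow_time (hφ : IsHamFlow H φ) (q : ℝ × CE n) :
    fderiv ℝ (fun p : ℝ × CE n => φ p.1 p.2) q (1, 0) = hamVF H q.1 (φ q.1 q.2) := by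
  have hline : HasDerivAt (fun r : ℝ => (r, q.2)) ((1:ℝ), (0:CE n)) q.1 :=
    (hasDerivAt_id q.1).prodMk (hasDerivAt_const q.1 q.2)
  have hΦ := ((hφ.smooth.differentiable (by simp)) q).hasFDerivAt
  have h1 : HasDerivAt (fun r : ℝ => φ r q.2)
      (fderiv ℝ (fun p : ℝ × CE n => φ p.1 p.2) q (1, 0)) q.1 := by
        have := hΦ.comp_hasDerivAt q.1 hline; exact this
  exact h1.unique (hφ.isFlow q.1 q.2)

lemma linearized_flow (hφ : IsHamFlow H φ) (hH : ContDiff ℝ (⊤ : ℕ∞) (Function.uncurry H))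
    (x a : CE n) (r : ℝ) :
    HasDerivAt (fun s => fderiv ℝ (fun y => φ s y) x a)
      (fderiv ℝ (fun z => hamVF H r z) (φ r x)
        (fderiv ℝ (fun y => φ r y) x a)) r := by
  set Φ : ℝ × CE n → CE n := fun p => φ p.1 p.2 with hΦdef
  have hΦ : ContDiff ℝ (⊤ : ℕ∞) Φ := hφ.smooth
  have hΦd : Differentiable ℝ Φ := hΦ.differentiable (by simp)
  have hV : ContDiff ℝ (⊤ : ℕ∞) (fun q : ℝ × CE n => hamVF H q.1 q.2) := hamVF_smooth hH
  have hVd := hV.differentiable (by simp)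
  have hfun : (fun s => fderiv ℝ (fun y => φ s y) x a)
      = fun s => fderiv ℝ Φ (s, x) (0, a) :=
    funext fun s => (fderiv_slice_space' hΦd (s, x) a).symm
  have h1 := deriv_commute hΦ r x a
  have h2 : (fun q : ℝ × CE n => fderiv ℝ Φ q (1, 0))
      = fun q : ℝ × CE n => hamVF H q.1 (Φ q) := funext fun q => fderiv_flow_time hφ q
  rw [h2] at h1
  have hinner : HasFDerivAt (fun q : ℝ × CE n => (q.1, Φ q))
      ((ContinuousLinearMap.fst ℝ ℝ (CE n)).prod (fderiv ℝ Φ (r, x))) (r, x) :=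
    (hasFDerivAt_fst).prodMk (hΦd (r, x)).hasFDerivAt
  have hchain : fderiv ℝ (fun q : ℝ × CE n => hamVF H q.1 (Φ q)) (r, x)
      = (fderiv ℝ (fun q : ℝ × CE n => hamVF H q.1 q.2) (r, Φ (r, x))).comp
        ((ContinuousLinearMap.fst ℝ ℝ (CE n)).prod (fderiv ℝ Φ (r, x))) := by
    exact ((hVd (r, Φ (r, x))).hasFDerivAt.comp (r, x) hinner).fderiv
  rw [hchain] at h1
  have happ : ((fderiv ℝ (fun q : ℝ × CE n => hamVF H q.1 q.2) (r, Φ (r, x))).comp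
        ((ContinuousLinearMap.fst ℝ ℝ (CE n)).prod (fderiv ℝ Φ (r, x)))) (0, a)
      = fderiv ℝ (fun z => hamVF H r z) (φ r x) (fderiv ℝ (fun y => φ r y) x a) := by
    have heq : ((ContinuousLinearMap.fst ℝ ℝ (CE n)).prod (fderiv ℝ Φ (r, x))) (0, a)
        = ((0:ℝ), fderiv ℝ Φ (r, x) (0, a)) := rfl
    rw [ContinuousLinearMap.comp_apply, heq, fderiv_slice_space' hΦd (r, x) a,
      fderiv_slice_space' hVd (r, Φ (r, x)) _]
  rw [happ] at h1
  rw [hfun]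
  exact h1

lemma flow_symplectic (hφ : IsHamFlow H φ) (hH : ContDiff ℝ (⊤ : ℕ∞) (Function.uncurry H))
    (x a b : CE n) (r : ℝ) :
    symp (fderiv ℝ (fun y => φ r y) x a) (fderiv ℝ (fun y => φ r y) x b) = symp a b := by
  set α : ℝ → CE n := fun s => fderiv ℝ (fun y => φ s y) x a with hα
  set β : ℝ → CE n := fun s => fderiv ℝ (fun y => φ s y) x b with hβ
  have hG : ∀ s, HasDerivAt (fun u => symp (α u) (β u)) 0 s := by
    intro s
    have hαd := linearized_flow hφ hH x a s
    have hβd := linearized_flow hφ hH x b s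
    have h := symp_hasDerivAt hαd hβd
    have hHs : ContDiff ℝ (⊤ : ℕ∞) (H s) := hH.comp (contDiff_const.prodMk contDiff_id)
    have hzero : symp (α s) (fderiv ℝ (fun z => hamVF H s z) (φ s x) (β s))
        + symp (fderiv ℝ (fun z => hamVF H s z) (φ s x) (α s)) (β s) = 0 := by
      rw [fderiv_hamVF_slice hH, fderiv_hamVF_slice hH, symp_negI_left, symp_negI_right]
      rw [hessian_symm (H s) hHs (φ s x) (β s) (α s), real_inner_comm (α s)]
      ring
    rw [hzero] at h
    exact h
  have hdiff : Differentiable ℝ (fun u => symp (α u) (β u)) := fun s => (hG s).differentiableAt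
  have hconst := is_const_of_deriv_eq_zero hdiff (fun s => (hG s).deriv) r 0
  have h0 : α 0 = a := by
    have h : (fun y => φ 0 y) = id := funext fun y => hφ.init y
    simp [hα, h]
  have h0' : β 0 = b := by
    have h : (fun y => φ 0 y) = id := funext fun y => hφ.init y
    simp [hβ, h]
  rw [hconst, h0, h0']

end FlowAux

section IntAux

lemma integrableOn_square {f : ℝ × ℝ → ℝ} (hf : Continuous f) : IntegrableOn f square := by
  apply hf.continuousOn.integrableOn_compact
  exact (isCompact_Icc).prod isCompact_Icc

lemma square_integral_swap {f : ℝ × ℝ → ℝ} (hf : Continuous f) :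
    ∫ p in square, f p = ∫ t in Icc (0:ℝ) 1, ∫ s in Icc (0:ℝ) 1, f (s, t) := by
  have hint : IntegrableOn f square := integrableOn_square hf
  rw [square] at hint ⊢
  have hint2 : Integrable f ((volume.restrict (Icc (0:ℝ) 1)).prod
      (volume.restrict (Icc (0:ℝ) 1))) := by
    rw [Measure.prod_restrict, ← Measure.volume_eq_prod ℝ ℝ]
    exact hint
  calc ∫ p in Icc (0:ℝ) 1 ×ˢ Icc (0:ℝ) 1, f p
      = ∫ p, f p ∂((volume.restrict (Icc (0:ℝ) 1)).prod (volume.restrict (Icc (0:ℝ) 1))) := by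
        rw [Measure.prod_restrict, ← Measure.volume_eq_prod ℝ ℝ]
    _ = ∫ t in Icc (0:ℝ) 1, ∫ s in Icc (0:ℝ) 1, f (s, t) :=
        MeasureTheory.integral_prod_symm f hint2

lemma square_integral_deriv {h : ℝ × ℝ → ℝ} (hh : ContDiff ℝ (⊤ : ℕ∞) h) :
    ∫ p in square, fderiv ℝ h p (1, 0) = ∫ t in (0:ℝ)..1, (h (1, t) - h (0, t)) := by
  have hD : Continuous fun p : ℝ × ℝ => fderiv ℝ h p (1, 0) :=
    (hh.continuous_fderiv (by simp)).clm_apply continuous_const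
  rw [square_integral_swap hD]
  rw [intervalIntegral.integral_of_le (by norm_num : (0:ℝ) ≤ 1)]
  rw [← MeasureTheory.integral_Icc_eq_integral_Ioc]
  apply MeasureTheory.setIntegral_congr_fun measurableSet_Icc
  intro t _
  dsimp only
  have hline : ∀ s : ℝ, HasDerivAt (fun s' => h (s', t)) (fderiv ℝ h (s, t) (1, 0)) s := by
    intro s
    have hl : HasDerivAt (fun s' : ℝ => (s', t)) ((1:ℝ), (0:ℝ)) s :=
      (hasDerivAt_id s).prodMk (hasDerivAt_const s t)
    exact ((hh.differentiable (by simp)) (s, t)).hasFDerivAt.comp_hasDerivAt s hl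
  have h1 : (∫ s in Icc (0:ℝ) 1, fderiv ℝ h (s, t) (1, 0))
      = ∫ s in (0:ℝ)..1, deriv (fun s' => h (s', t)) s := by
    rw [intervalIntegral.integral_of_le (by norm_num : (0:ℝ) ≤ 1),
      ← MeasureTheory.integral_Icc_eq_integral_Ioc]
    apply MeasureTheory.setIntegral_congr_fun measurableSet_Icc
    intro s _
    exact ((hline s).deriv).symm
  rw [h1]
  rw [intervalIntegral.integral_deriv_eq_sub]
  · intro s _
    exact (hline s).differentiableAt
  · apply Continuous.intervalIntegrable
    have heq : deriv (fun s' => h (s', t)) = fun s => fderiv ℝ h (s, t) (1, 0) :=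
      funext fun s => (hline s).deriv
    rw [heq]
    exact hD.comp (continuous_id.prodMk continuous_const)

end IntAux

/-- Lemma 4.3: the coordinate change on the second factor,
`w(s,t) = φ_H^{1−t}((φ_H^1)⁻¹(w′(s,t)))`, preserves the action functional for
`H̃(t,x) = −H(1−t,x)`:
`∫ w*ω + ∫₀¹ H̃(t, w(1,t)) dt = ∫ (w′)*ω + ∫₀¹ H̃(t, w(0,t)) dt`. -/
theorem coordinate_change_action_second {n : ℕ} (H : ℝ → CE n → ℝ) (φ : ℝ → CE n ≃ CE n)
    (hHsmooth : ContDiff ℝ (⊤ : ℕ∞) (Function.uncurry H))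
    (hHsupp : HasCompactSupport (Function.uncurry H))
    (hφ : IsHamFlow H φ)
    (Htilde : ℝ → CE n → ℝ) (hHtilde : Htilde = fun t x => -H (1 - t) x)
    (w' : ℝ × ℝ → CE n) (hw' : ContDiff ℝ (⊤ : ℕ∞) w')
    (w : ℝ × ℝ → CE n) (hw : w = fun p : ℝ × ℝ => φ (1 - p.2) ((φ 1).symm (w' p))) :
    areaSq w + (∫ t in (0:ℝ)..1, Htilde t (w (1, t)))
      = areaSq w' + ∫ t in (0:ℝ)..1, Htilde t (w (0, t)) := by
  subst hHtilde
  have hΦ : ContDiff ℝ (⊤ : ℕ∞) (fun p : ℝ × CE n => φ p.1 p.2) := hφ.smooth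
  have hΦd : Differentiable ℝ (fun p : ℝ × CE n => φ p.1 p.2) := hΦ.differentiable (by simp)
  set g : ℝ × ℝ → CE n := fun p => (φ 1).symm (w' p) with hgdef
  have hgsm : ContDiff ℝ (⊤ : ℕ∞) g := hφ.smooth_symm.comp (contDiff_const.prodMk hw')
  have hgd : Differentiable ℝ g := hgsm.differentiable (by simp)
  have hwsm : ContDiff ℝ (⊤ : ℕ∞) w := by
    rw [hw]
    exact hΦ.comp ((contDiff_const.sub contDiff_snd).prodMk hgsm)
  have hwd : Differentiable ℝ w := hwsm.differentiable (by simp)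
  have hw'd : Differentiable ℝ w' := hw'.differentiable (by simp)
  have hw'g : ∀ p, w' p = φ 1 (g p) := fun p => ((φ 1).apply_symm_apply (w' p)).symm
  have hslice : ∀ r : ℝ, Differentiable ℝ (fun y : CE n => φ r y) := by
    intro r y
    exact ((hΦd (r, y)).hasFDerivAt.comp y (hasFDerivAt_prodMk_right r y)).differentiableAt
  -- h : the scalar function whose s-derivative appears
  set h : ℝ × ℝ → ℝ := fun q => -H (1 - q.2) (w q) with hhdef
  have hhsm : ContDiff ℝ (⊤ : ℕ∞) h := by
    have : ContDiff ℝ (⊤ : ℕ∞) (fun q : ℝ × ℝ => Function.uncurry H (1 - q.2, w q)) :=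
      hHsmooth.comp ((contDiff_const.sub contDiff_snd).prodMk hwsm)
    exact this.neg
  -- pointwise identity
  have key : ∀ p : ℝ × ℝ, symp (d1 w p) (d2 w p)
      = symp (d1 w' p) (d2 w' p) - fderiv ℝ h p (1, 0) := by
    intro p
    obtain ⟨s, t⟩ := p
    set r : ℝ := 1 - t with hrdef
    set z : CE n := g (s, t) with hzdef
    have hga : HasDerivAt (fun s' => g (s', t)) (d1 g (s, t)) s := d1_hasDerivAt hgd (s, t)
    have hgb : HasDerivAt (fun t' => g (s, t')) (d2 g (s, t)) t := d2_hasDerivAt hgd (s, t)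
    set a₁ : CE n := d1 g (s, t)
    set a₂ : CE n := d2 g (s, t)
    -- d1 w
    have h1 : d1 w (s, t) = fderiv ℝ (fun y => φ r y) z a₁ := by
      have hc : HasDerivAt (fun s' => w (s', t)) (fderiv ℝ (fun y => φ r y) z a₁) s := by
        have : (fun s' => w (s', t)) = fun s' => φ r (g (s', t)) := by
          funext s'; rw [hw]
        rw [this]
        exact ((hslice r z).hasFDerivAt).comp_hasDerivAt s hga
      exact hc.deriv
    -- d1 w'
    have h2 : d1 w' (s, t) = fderiv ℝ (fun y => φ 1 y) z a₁ := by
      have hc : HasDerivAt (fun s' => w' (s', t)) (fderiv ℝ (fun y => φ 1 y) z a₁) s := by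
        have : (fun s' => w' (s', t)) = fun s' => φ 1 (g (s', t)) := by
          funext s'; rw [hw'g]
        rw [this]
        exact ((hslice 1 z).hasFDerivAt).comp_hasDerivAt s hga
      exact hc.deriv
    -- d2 w'
    have h3 : d2 w' (s, t) = fderiv ℝ (fun y => φ 1 y) z a₂ := by
      have hc : HasDerivAt (fun t' => w' (s, t')) (fderiv ℝ (fun y => φ 1 y) z a₂) t := by
        have : (fun t' => w' (s, t')) = fun t' => φ 1 (g (s, t')) := by
          funext t'; rw [hw'g]
        rw [this]
        exact ((hslice 1 z).hasFDerivAt).comp_hasDerivAt t hgb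
      exact hc.deriv
    -- d2 w
    have h4 : d2 w (s, t) = fderiv ℝ (fun y => φ r y) z a₂ - hamVF H r (w (s, t)) := by
      have hpair : HasDerivAt (fun t' : ℝ => ((1 - t' : ℝ), g (s, t')))
          (((-1 : ℝ), a₂) : ℝ × CE n) t := by
        have hone : HasDerivAt (fun t' : ℝ => (1 - t' : ℝ)) (-1) t := by
          simpa using (hasDerivAt_id t).const_sub 1
        exact hone.prodMk hgb
      have hc : HasDerivAt (fun t' => w (s, t'))
          (fderiv ℝ (fun p : ℝ × CE n => φ p.1 p.2) (r, z) ((-1 : ℝ), a₂)) t := by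
        have : (fun t' => w (s, t'))
            = (fun p : ℝ × CE n => φ p.1 p.2) ∘ (fun t' : ℝ => ((1 - t' : ℝ), g (s, t'))) := by
          funext t'; rw [hw]; rfl
        rw [this]
        exact (hΦd (r, z)).hasFDerivAt.comp_hasDerivAt t hpair
      have hdec : fderiv ℝ (fun p : ℝ × CE n => φ p.1 p.2) (r, z) ((-1 : ℝ), a₂)
          = fderiv ℝ (fun y => φ r y) z a₂ - hamVF H r (w (s, t)) := by
        have hsplit : (((-1 : ℝ), a₂) : ℝ × CE n)
            = ((0 : ℝ), a₂) - ((1 : ℝ), (0 : CE n)) := by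
          simp [Prod.ext_iff]
        rw [hsplit, map_sub, fderiv_flow_time hφ (r, z),
          fderiv_slice_space' hΦd (r, z) a₂]
        have : φ r z = w (s, t) := by rw [hw]
        rw [this]
      have hfin := hc.deriv
      rw [hdec] at hfin
      exact hfin
    -- assemble
    have hsymp1 : symp (fderiv ℝ (fun y => φ r y) z a₁) (fderiv ℝ (fun y => φ r y) z a₂)
        = symp a₁ a₂ := flow_symplectic hφ hHsmooth z a₁ a₂ r
    have hsymp2 : symp (d1 w' (s, t)) (d2 w' (s, t)) = symp a₁ a₂ := by
      rw [h2, h3]; exact flow_symplectic hφ hHsmooth z a₁ a₂ 1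
    -- the Hamiltonian term
    have hham : symp (d1 w (s, t)) (hamVF H r (w (s, t)))
        = - fderiv ℝ (H r) (w (s, t)) (d1 w (s, t)) := by
      rw [hamVF, symp_negI_right, real_inner_comm, inner_gradient]
    have hfh : fderiv ℝ h (s, t) (1, 0) = - fderiv ℝ (H r) (w (s, t)) (d1 w (s, t)) := by
      have hHr : ContDiff ℝ (⊤ : ℕ∞) (H r) := hHsmooth.comp (contDiff_const.prodMk contDiff_id)
      have hc : HasDerivAt (fun s' => h (s', t))
          (- fderiv ℝ (H r) (w (s, t)) (d1 w (s, t))) s := by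
        have hwline : HasDerivAt (fun s' => w (s', t)) (d1 w (s, t)) s := d1_hasDerivAt hwd (s, t)
        have hc1 : HasDerivAt (fun s' => H r (w (s', t)))
            (fderiv ℝ (H r) (w (s, t)) (d1 w (s, t))) s :=
          ((hHr.differentiable (by simp) _).hasFDerivAt).comp_hasDerivAt s hwline
        have : (fun s' => h (s', t)) = fun s' => -(H r (w (s', t))) := by
          funext s'; rw [hhdef]
        rw [this]
        exact hc1.neg
      exact ((hasDerivAt_slice_d1 (hhsm.differentiable (by simp)) (s, t)).unique hc)
    calc symp (d1 w (s, t)) (d2 w (s, t))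
        = symp (d1 w (s, t)) (fderiv ℝ (fun y => φ r y) z a₂ - hamVF H r (w (s, t))) := by
          rw [h4]
      _ = symp (d1 w (s, t)) (fderiv ℝ (fun y => φ r y) z a₂)
            - symp (d1 w (s, t)) (hamVF H r (w (s, t))) := symp_sub_right _ _ _
      _ = symp a₁ a₂ + fderiv ℝ (H r) (w (s, t)) (d1 w (s, t)) := by
          rw [hham, h1, hsymp1]; ring
      _ = symp (d1 w' (s, t)) (d2 w' (s, t)) - fderiv ℝ h (s, t) (1, 0) := by
          rw [hsymp2, hfh]; ring
  -- continuity of the integrands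
  have hcd1w : Continuous (d1 w) := by
    have : d1 w = fun p => fderiv ℝ w p (1, 0) := funext fun p => d1_eq_fderiv hwd p
    rw [this]
    exact (hwsm.continuous_fderiv (by simp)).clm_apply continuous_const
  have hcd2w : Continuous (d2 w) := by
    have : d2 w = fun p => fderiv ℝ w p (0, 1) := funext fun p => d2_eq_fderiv hwd p
    rw [this]
    exact (hwsm.continuous_fderiv (by simp)).clm_apply continuous_const
  have hcd1w' : Continuous (d1 w') := by
    have : d1 w' = fun p => fderiv ℝ w' p (1, 0) := funext fun p => d1_eq_fderiv hw'd p
    rw [this]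
    exact (hw'.continuous_fderiv (by simp)).clm_apply continuous_const
  have hcd2w' : Continuous (d2 w') := by
    have : d2 w' = fun p => fderiv ℝ w' p (0, 1) := funext fun p => d2_eq_fderiv hw'd p
    rw [this]
    exact (hw'.continuous_fderiv (by simp)).clm_apply continuous_const
  have hcf2 : Continuous fun p => symp (d1 w' p) (d2 w' p) := symp_continuous hcd1w' hcd2w'
  have hcD : Continuous fun p : ℝ × ℝ => fderiv ℝ h p (1, 0) :=
    (hhsm.continuous_fderiv (by simp)).clm_apply continuous_const
  -- integrate the pointwise identity over the square
  have hint : areaSq w = areaSq w'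
      - ∫ p in square, fderiv ℝ h p (1, 0) := by
    rw [areaSq, areaSq]
    have heq : (fun p => symp (d1 w p) (d2 w p))
        = fun p => symp (d1 w' p) (d2 w' p) - fderiv ℝ h p (1, 0) := funext key
    rw [heq]
    exact MeasureTheory.integral_sub (integrableOn_square hcf2) (integrableOn_square hcD)
  rw [hint, square_integral_deriv hhsm]
  -- split the boundary integral
  have hcont1 : Continuous fun t => h (1, t) :=
    hhsm.continuous.comp (continuous_const.prodMk continuous_id)
  have hcont0 : Continuous fun t => h (0, t) :=
    hhsm.continuous.comp (continuous_const.prodMk continuous_id)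
  have hsub : (∫ t in (0:ℝ)..1, (h (1, t) - h (0, t)))
      = (∫ t in (0:ℝ)..1, h (1, t)) - ∫ t in (0:ℝ)..1, h (0, t) :=
    intervalIntegral.integral_sub (hcont1.intervalIntegrable 0 1) (hcont0.intervalIntegrable 0 1)
  have hb1 : (∫ t in (0:ℝ)..1, h (1, t))
      = ∫ t in (0:ℝ)..1, -H (1 - t) (w (1, t)) := rfl
  have hb0 : (∫ t in (0:ℝ)..1, h (0, t))
      = ∫ t in (0:ℝ)..1, -H (1 - t) (w (0, t)) := rfl
  rw [hsub, hb1, hb0]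
  ring

end
end
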